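/- arXiv:1311.1349 — 2 statements merged into one kernel-verified Lean document; each statement's English description precedes it below -/
import Mathlib

section
/- Sandwich for the rescaled Airy approximants: fix β ∈ (1/3,1), δ ∈ (0,1), u ∈ [0,1−δ), and λ_± = 1 ± δ^{-β}n^{-1/3}. On the event E_n(δ) = {Z'_{λ_+}[n]_n ≥ 0 and Z_{λ_−}[n+2n^{2/3}]_n ≤ 0}, for all v ∈ [u, u+δ]: B_{n,−}(v) − B_{n,−}(u) − 2δ^{1−β} ≤ A_n(v) − A_n(u) ≤ B_{n,+}(v) − B_{n,+}(u) + 4δ^{1−β}. -/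
open Set MeasureTheory Filter

/-- An increasing sequence of points of `S` in the rectangle `(p.1,q.1] × (p.2,q.2]`. -/
def IncrSeq (S : Set (ℝ × ℝ)) (p q : ℝ × ℝ) {k : ℕ} (f : Fin k → ℝ × ℝ) : Prop :=
  (∀ i, f i ∈ S ∧ p.1 < (f i).1 ∧ (f i).1 ≤ q.1 ∧ p.2 < (f i).2 ∧ (f i).2 ≤ q.2) ∧
  ∀ i j : Fin k, i < j → (f i).1 < (f j).1 ∧ (f i).2 < (f j).2

/-- Last-passage time: maximal length of an increasing sequence of points of `S`
in the rectangle determined by `p ≤ q`. -/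
noncomputable def lpp (S : Set (ℝ × ℝ)) (p q : ℝ × ℝ) : ℕ :=
  sSup {k : ℕ | ∃ f : Fin k → ℝ × ℝ, IncrSeq S p q f}

/-- Last-passage time with boundary counting function `ν` on the `x`-axis:
`L_ν[x]_t = sup_{z ≤ x} (ν z + L((z,0),(x,t)))`. -/
noncomputable def Lb (S : Set (ℝ × ℝ)) (ν : ℝ → ℝ) (x t : ℝ) : ℝ :=
  sSup {v : ℝ | ∃ z ≤ x, v = ν z + (lpp S (z, 0) (x, t) : ℝ)}

/-- Rightmost exit point. -/
noncomputable def Zright (S : Set (ℝ × ℝ)) (ν : ℝ → ℝ) (x t : ℝ) : ℝ :=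
  sSup {z : ℝ | z ≤ x ∧ Lb S ν x t = ν z + (lpp S (z, 0) (x, t) : ℝ)}

/-- Leftmost exit point. -/
noncomputable def Zleft (S : Set (ℝ × ℝ)) (ν : ℝ → ℝ) (x t : ℝ) : ℝ :=
  sInf {z : ℝ | z ≤ x ∧ Lb S ν x t = ν z + (lpp S (z, 0) (x, t) : ℝ)}

/-- The rescaled Hammersley profile
`A_n(u) = (L[n+2un^{2/3}]_n − (2n+2un^{2/3}) + u²n^{1/3}) / n^{1/3}`. -/
noncomputable def AiryApprox (S : Set (ℝ × ℝ)) (n : ℕ) (u : ℝ) : ℝ :=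
  ((lpp S (0, 0) ((n:ℝ) + 2*u*(n:ℝ) ^ ((2:ℝ)/3), (n:ℝ)) : ℝ)
      - (2*(n:ℝ) + 2*u*(n:ℝ) ^ ((2:ℝ)/3)) + u ^ 2 * (n:ℝ) ^ ((1:ℝ)/3))
    / (n:ℝ) ^ ((1:ℝ)/3)

/-- The rescaled equilibrium profile
`B_{n,λ}(u) = (L_λ[n+2un^{2/3}]_n − L_λ[n]_n − 2λun^{2/3}) / n^{1/3}`. -/
noncomputable def EqApprox (S : Set (ℝ × ℝ)) (ν : ℝ → ℝ) (lam : ℝ) (n : ℕ) (u : ℝ) : ℝ :=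
  (Lb S ν ((n:ℝ) + 2*u*(n:ℝ) ^ ((2:ℝ)/3)) (n:ℝ) - Lb S ν (n:ℝ) (n:ℝ)
      - lam * (2*u*(n:ℝ) ^ ((2:ℝ)/3)))
    / (n:ℝ) ^ ((1:ℝ)/3)

/-!
Write `t = n^{1/3}` and `x, y` for the abscissas `n + 2un^{2/3} ≤ n + 2vn^{2/3}`. Both
`A_n(v) − A_n(u)` and `B_{n,λ}(v) − B_{n,λ}(u)` are last-passage increments from `x` to `y`
divided by `t`, plus drifts; the two differ by the increment gap over `t` plus the defect
`(λ − 1)(2v − 2u)t + v² − u²`. On `E_n(δ)`, monotonicity of exit points moves the exit-point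
conditions from `n` to `x` (for `λ_+`) and from `n + 2n^{2/3}` to `y` (for `λ_−`), so local
comparison gives the increment gap its sign. Since `(λ_± − 1)t = ±δ^{−β}` and
`v − u ≤ δ ≤ δ^{1−β}`, the defect lies in `[−2δ^{1−β}, 4δ^{1−β}]`.
-/

noncomputable def scaledAbscissa (n : ℕ) (u : ℝ) : ℝ := (n:ℝ) + 2*u*(n:ℝ) ^ ((2:ℝ)/3)

lemma self_le_scaledAbscissa (n : ℕ) {u : ℝ} (hu : 0 ≤ u) : (n:ℝ) ≤ scaledAbscissa n u := by
  unfold scaledAbscissa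
  exact le_add_of_nonneg_right (by positivity)

lemma scaledAbscissa_mono (n : ℕ) : Monotone (scaledAbscissa n) := fun u v huv => by
  unfold scaledAbscissa; gcongr

lemma scaledAbscissa_le_of_le_one (n : ℕ) {v : ℝ} (hv : v ≤ 1) :
    scaledAbscissa n v ≤ (n:ℝ) + 2*(n:ℝ) ^ ((2:ℝ)/3) := by
  simpa [scaledAbscissa] using scaledAbscissa_mono n hv

lemma airyApprox_sub_sub_eqApprox_sub (S : Set (ℝ × ℝ)) (ν : ℝ → ℝ) (lam : ℝ) {n : ℕ}
    (hn : 0 < n) (u v : ℝ) :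
    (AiryApprox S n v - AiryApprox S n u) - (EqApprox S ν lam n v - EqApprox S ν lam n u)
      = (((lpp S (0, 0) (scaledAbscissa n v, n) : ℝ) - lpp S (0, 0) (scaledAbscissa n u, n))
          - (Lb S ν (scaledAbscissa n v) n - Lb S ν (scaledAbscissa n u) n)) / (n:ℝ) ^ ((1:ℝ)/3)
        + ((lam - 1) * (2*v - 2*u) * (n:ℝ) ^ ((1:ℝ)/3) + v ^ 2 - u ^ 2) := by
  have hn' : (0:ℝ) < n := Nat.cast_pos.mpr hn
  have ht2 : (n:ℝ) ^ ((2:ℝ)/3) = (n:ℝ) ^ ((1:ℝ)/3) * (n:ℝ) ^ ((1:ℝ)/3) := by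
    rw [← Real.rpow_add hn']; norm_num
  simp only [AiryApprox, EqApprox, scaledAbscissa, ht2]
  field_simp
  ring

lemma rpow_neg_mul_le_rpow_one_sub {β δ d : ℝ} (hδ : 0 < δ) (hd : d ≤ δ) :
    δ ^ (-β) * d ≤ δ ^ (1 - β) :=
  calc δ ^ (-β) * d ≤ δ ^ (-β) * δ := by gcongr
    _ = δ ^ (1 - β) := by rw [sub_eq_neg_add, Real.rpow_add hδ, Real.rpow_one]

lemma neg_two_mul_rpow_le_sandwich_defect {β δ u v lam t : ℝ} (hδ : 0 < δ)
    (hu : 0 ≤ u) (huv : u ≤ v) (hvu : v ≤ u + δ) (hlam : (lam - 1) * t = -δ ^ (-β)) :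
    -2 * δ ^ (1 - β) ≤ (lam - 1) * (2*v - 2*u) * t + v ^ 2 - u ^ 2 := by
  have hdrift : (lam - 1) * (2*v - 2*u) * t = -2 * (δ ^ (-β) * (v - u)) := by
    linear_combination (2*v - 2*u) * hlam
  have hsq : u ^ 2 ≤ v ^ 2 := pow_le_pow_left₀ hu huv 2
  linarith [rpow_neg_mul_le_rpow_one_sub (β := β) hδ (by linarith : v - u ≤ δ)]

lemma sandwich_defect_le_four_mul_rpow {β δ u v lam t : ℝ} (hβ : 0 ≤ β) (hδ : 0 < δ)
    (hu : 0 ≤ u) (huv : u ≤ v) (hvu : v ≤ u + δ) (hδu : u + δ ≤ 1)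
    (hlam : (lam - 1) * t = δ ^ (-β)) :
    (lam - 1) * (2*v - 2*u) * t + v ^ 2 - u ^ 2 ≤ 4 * δ ^ (1 - β) := by
  have hdrift : (lam - 1) * (2*v - 2*u) * t = 2 * (δ ^ (-β) * (v - u)) := by
    linear_combination (2*v - 2*u) * hlam
  have hsq : v ^ 2 - u ^ 2 ≤ 2 * δ := by nlinarith
  have hδ_le : δ ≤ δ ^ (1 - β) := by
    simpa using Real.rpow_le_rpow_of_exponent_ge hδ (by linarith) (by linarith : 1 - β ≤ 1)
  linarith [rpow_neg_mul_le_rpow_one_sub (β := β) hδ (by linarith : v - u ≤ δ)]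

/-- **Sandwich for the rescaled Airy approximants.** With `λ_± = 1 ± δ^{-β}n^{-1/3}`
and boundary processes `ν₊, ν₋` of intensities `λ_+, λ_-`, on the event
`E_n(δ) = {Z'_{λ_+}[n]_n ≥ 0 and Z_{λ_−}[n+2n^{2/3}]_n ≤ 0}`, for all `v ∈ [u, u+δ]`:
`B_{n,−}(v) − B_{n,−}(u) − 2δ^{1−β} ≤ A_n(v) − A_n(u) ≤ B_{n,+}(v) − B_{n,+}(u) + 4δ^{1−β}`. -/
theorem airy_sandwich (S : Set (ℝ × ℝ)) (νp νm : ℝ → ℝ) (n : ℕ) (hn : 1 ≤ n)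
    (β δ u : ℝ) (hβ : β ∈ Set.Ioo (1/3 : ℝ) 1) (hδ : δ ∈ Set.Ioo (0:ℝ) 1)
    (hu : u ∈ Set.Ico (0:ℝ) (1 - δ))
    -- local comparison (Lemma 2.1) for the boundary process of intensity `λ_+`
    (hcomp_p : ∀ x y : ℝ, 0 ≤ x → x ≤ y → 0 ≤ Zleft S νp x (n:ℝ) →
      (lpp S (0, 0) (y, (n:ℝ)) : ℝ) - (lpp S (0, 0) (x, (n:ℝ)) : ℝ)
        ≤ Lb S νp y (n:ℝ) - Lb S νp x (n:ℝ))
    -- local comparison for the boundary process of intensity `λ_-`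
    (hcomp_m : ∀ x y : ℝ, 0 ≤ x → x ≤ y → Zright S νm y (n:ℝ) ≤ 0 →
      Lb S νm y (n:ℝ) - Lb S νm x (n:ℝ)
        ≤ (lpp S (0, 0) (y, (n:ℝ)) : ℝ) - (lpp S (0, 0) (x, (n:ℝ)) : ℝ))
    -- monotonicity of exit points in `x`
    (hmono_p : Monotone (fun x => Zleft S νp x (n:ℝ)))
    (hmono_m : Monotone (fun x => Zright S νm x (n:ℝ)))
    -- the event `E_n(δ)`
    (hE1 : 0 ≤ Zleft S νp (n:ℝ) (n:ℝ))
    (hE2 : Zright S νm ((n:ℝ) + 2*(n:ℝ) ^ ((2:ℝ)/3)) (n:ℝ) ≤ 0) :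
    ∀ v ∈ Set.Icc u (u + δ),
      EqApprox S νm (1 - δ ^ (-β) / (n:ℝ) ^ ((1:ℝ)/3)) n v
          - EqApprox S νm (1 - δ ^ (-β) / (n:ℝ) ^ ((1:ℝ)/3)) n u - 2 * δ ^ (1 - β)
        ≤ AiryApprox S n v - AiryApprox S n u
      ∧ AiryApprox S n v - AiryApprox S n u
        ≤ EqApprox S νp (1 + δ ^ (-β) / (n:ℝ) ^ ((1:ℝ)/3)) n v
          - EqApprox S νp (1 + δ ^ (-β) / (n:ℝ) ^ ((1:ℝ)/3)) n u + 4 * δ ^ (1 - β) := by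
  rintro v ⟨huv, hvu⟩
  have ht : (0:ℝ) < (n:ℝ) ^ ((1:ℝ)/3) := by positivity
  have hx : 0 ≤ scaledAbscissa n u := (Nat.cast_nonneg n).trans (self_le_scaledAbscissa n hu.1)
  have hxy : scaledAbscissa n u ≤ scaledAbscissa n v := scaledAbscissa_mono n huv
  have hLp := hcomp_p _ _ hx hxy (hE1.trans (hmono_p (self_le_scaledAbscissa n hu.1)))
  have hLm := hcomp_m _ _ hx hxy
    ((hmono_m (scaledAbscissa_le_of_le_one n (by linarith [hu.2]))).trans hE2)
  have hdp := airyApprox_sub_sub_eqApprox_sub S νp (1 + δ ^ (-β) / (n:ℝ) ^ ((1:ℝ)/3)) hn u v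
  have hdm := airyApprox_sub_sub_eqApprox_sub S νm (1 - δ ^ (-β) / (n:ℝ) ^ ((1:ℝ)/3)) hn u v
  have hup := sandwich_defect_le_four_mul_rpow (by linarith [hβ.1]) hδ.1 hu.1 huv hvu (by linarith [hu.2])
    (by field_simp; ring : (1 + δ ^ (-β) / (n:ℝ) ^ ((1:ℝ)/3) - 1) * (n:ℝ) ^ ((1:ℝ)/3) = δ ^ (-β))
  have hlow := neg_two_mul_rpow_le_sandwich_defect hδ.1 hu.1 huv hvu
    (by field_simp; ring : (1 - δ ^ (-β) / (n:ℝ) ^ ((1:ℝ)/3) - 1) * (n:ℝ) ^ ((1:ℝ)/3) = -δ ^ (-β))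
  exact ⟨by linarith [div_nonneg (sub_nonneg.mpr hLm) ht.le],
    by linarith [div_nonpos_of_nonpos_of_nonneg (sub_nonpos.mpr hLp) ht.le]⟩
end

section
/- Modulus-of-continuity bound: suppose for processes X_n on [0,1] and events E_n(δ) with limsup_n P(E_n(δ)^c) ≤ Cδ^{3β} (β > 1/3), on E_n(δ) one has sup_{v∈[u,u+δ]} |X_n(v) − X_n(u)| ≤ max_± sup_{v∈[u,u+δ]} |Y_{n,±}(v) − Y_{n,±}(u)| + 4δ^{1−β}, where Y_{n,±} converge weakly to a Brownian motion B(2·). Then for every η > 0, limsup_{δ→0+} (1/δ) · limsup_{n→∞} P( sup_{v∈[u,u+δ]} |X_n(v) − X_n(u)| > η ) = 0. -/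
/-!
On the good event `E n δ`, once `4 δ^(1-β) ≤ η/2`, an oscillation of `X n` above `η` forces one
of `Y_{n,±}` to oscillate above `η/2`. Passing to `limsup` in `n`, the bad event costs `C δ^(3β)`
and each of `Y_{n,±}` costs the Brownian tail `4 exp (-η²/(16δ))`. Both are `o(δ)` as `δ → 0⁺`,
the first because `3β > 1`.
-/

open Set MeasureTheory Filter Topology
open scoped ENNReal

theorem ENNReal.limsup_add_le_add {α : Type*} {f : Filter α} (u v : α → ℝ≥0∞) :
    limsup (u + v) f ≤ limsup u f + limsup v f := by
  refine ENNReal.le_of_forall_pos_le_add fun ε hε hfin => ?_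
  have hε2 : (ε / 2 : ℝ≥0∞) ≠ 0 := by simp [hε.ne']
  have hu : ∀ᶠ x in f, u x < limsup u f + ε / 2 := eventually_lt_of_limsup_lt <|
    ENNReal.lt_add_right (ne_top_of_le_ne_top hfin.ne le_self_add) hε2
  have hv : ∀ᶠ x in f, v x < limsup v f + ε / 2 := eventually_lt_of_limsup_lt <|
    ENNReal.lt_add_right (ne_top_of_le_ne_top hfin.ne le_add_self) hε2
  calc limsup (u + v) f ≤ (limsup u f + ε / 2) + (limsup v f + ε / 2) :=
        limsup_le_of_le (by isBoundedDefault) <| by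
          filter_upwards [hu, hv] with x hux hvx using add_le_add hux.le hvx.le
    _ = limsup u f + limsup v f + ε := by rw [add_add_add_comm, ENNReal.add_halves]

theorem tendsto_rpow_nhdsGT_zero {p : ℝ} (hp : 0 < p) :
    Tendsto (fun x : ℝ => x ^ p) (𝓝[>] 0) (𝓝 0) := by
  have h := (Real.continuousAt_rpow_const 0 p (.inr hp.le)).tendsto.mono_left
    (nhdsWithin_le_nhds (s := Ioi 0))
  rwa [Real.zero_rpow hp.ne'] at h

theorem tendsto_mul_rpow_div_nhdsGT_zero (c : ℝ) {p : ℝ} (hp : 1 < p) :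
    Tendsto (fun x : ℝ => c * x ^ p / x) (𝓝[>] 0) (𝓝 0) := by
  have h := (tendsto_rpow_nhdsGT_zero (sub_pos.mpr hp)).const_mul c
  rw [mul_zero] at h
  refine h.congr' ?_
  filter_upwards [self_mem_nhdsWithin] with x (hx : 0 < x)
  rw [Real.rpow_sub_one hx.ne', mul_div_assoc]

theorem tendsto_mul_exp_neg_div_div_nhdsGT_zero (c : ℝ) {b : ℝ} (hb : 0 < b) :
    Tendsto (fun x : ℝ => c * Real.exp (-(b / x)) / x) (𝓝[>] 0) (𝓝 0) := by
  have h := ((tendsto_rpow_mul_exp_neg_mul_atTop_nhds_zero 1 b hb).const_mul c).comp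
    tendsto_inv_nhdsGT_zero
  rw [mul_zero] at h
  refine h.congr fun x => ?_
  simp only [Function.comp_apply, Real.rpow_one]
  ring_nf

theorem ENNReal.tendsto_ofReal_inv_mul_ofReal_nhdsGT_zero {g : ℝ → ℝ}
    (hg : Tendsto (fun x => g x / x) (𝓝[>] 0) (𝓝 0)) :
    Tendsto (fun x => ENNReal.ofReal (1 / x) * ENNReal.ofReal (g x)) (𝓝[>] 0) (𝓝 0) := by
  rw [← ENNReal.ofReal_zero]
  refine (ENNReal.tendsto_ofReal hg).congr' ?_
  filter_upwards [self_mem_nhdsWithin] with x (hx : 0 < x)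
  rw [← ENNReal.ofReal_mul (by positivity), one_div_mul_eq_div]

theorem measure_lt_le_compl_add_add {Ω : Type*} [MeasurableSpace Ω] (μ : Measure Ω)
    {x y z : Ω → ℝ} {E : Set Ω} {r s t : ℝ} (hE : ∀ ω ∈ E, x ω ≤ max (y ω) (z ω) + r)
    (hrst : t + r ≤ s) :
    μ {ω | s < x ω} ≤ μ Eᶜ + (μ {ω | t < y ω} + μ {ω | t < z ω}) := by
  have hsub : {ω | s < x ω} ⊆ Eᶜ ∪ ({ω | t < y ω} ∪ {ω | t < z ω}) := by
    intro ω (hω : s < x ω)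
    by_cases hωE : ω ∈ E
    · have : t < max (y ω) (z ω) := by linarith [hE ω hωE]
      exact .inr (lt_max_iff.mp this)
    · exact .inl hωE
  calc μ {ω | s < x ω} ≤ μ (Eᶜ ∪ ({ω | t < y ω} ∪ {ω | t < z ω})) := measure_mono hsub
    _ ≤ _ := (measure_union_le _ _).trans (add_le_add_right (measure_union_le _ _) _)

theorem limsup_measure_lt_le_compl_add_add {Ω ι : Type*} [MeasurableSpace Ω] (μ : Measure Ω)
    {l : Filter ι} {x y z : ι → Ω → ℝ} {E : ι → Set Ω} {r s t : ℝ}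
    (hE : ∀ i, ∀ ω ∈ E i, x i ω ≤ max (y i ω) (z i ω) + r) (hrst : t + r ≤ s) :
    limsup (fun i => μ {ω | s < x i ω}) l ≤ limsup (fun i => μ (E i)ᶜ) l +
      (limsup (fun i => μ {ω | t < y i ω}) l + limsup (fun i => μ {ω | t < z i ω}) l) :=
  calc limsup (fun i => μ {ω | s < x i ω}) l
      ≤ limsup ((fun i => μ (E i)ᶜ) +
          ((fun i => μ {ω | t < y i ω}) + fun i => μ {ω | t < z i ω})) l :=
        limsup_le_limsup (.of_forall fun i => measure_lt_le_compl_add_add μ (hE i) hrst)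
    _ ≤ _ := (ENNReal.limsup_add_le_add _ _).trans
        (add_le_add_right (ENNReal.limsup_add_le_add _ _) _)

theorem oscillation_control_general
    {Ω Ω' : Type*} [MeasurableSpace Ω] [MeasurableSpace Ω']
    (ℙ : Measure Ω) (ℙ' : Measure Ω')
    (X Yp Ym : ℕ → ℝ → Ω → ℝ) (B : ℝ → Ω' → ℝ)
    (E : ℕ → ℝ → Set Ω) (C β : ℝ) (hβ : β ∈ Set.Ioo (1/3 : ℝ) 1)
    (u : ℝ)
    -- probability of the bad events
    (hE : ∀ δ ∈ Set.Ioo (0:ℝ) 1,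
      Filter.limsup (fun n => ℙ (E n δ)ᶜ) atTop ≤ ENNReal.ofReal (C * δ ^ (3 * β)))
    -- oscillation bound on the good events
    (hosc : ∀ (n : ℕ), ∀ δ ∈ Set.Ioo (0:ℝ) 1, ∀ ω ∈ E n δ,
      (⨆ v : Set.Icc u (u + δ), |X n (↑v) ω - X n u ω|)
        ≤ max (⨆ v : Set.Icc u (u + δ), |Yp n (↑v) ω - Yp n u ω|)
              (⨆ v : Set.Icc u (u + δ), |Ym n (↑v) ω - Ym n u ω|) + 4 * δ ^ (1 - β))
    -- weak convergence of `Y_{n,±}` to `B(2·)`: convergence of sup-increment tails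
    (hYp : ∀ δ ∈ Set.Ioo (0:ℝ) 1, ∀ s : ℝ, 0 < s →
      Filter.limsup (fun n =>
          ℙ {ω | s < ⨆ v : Set.Icc u (u + δ), |Yp n (↑v) ω - Yp n u ω|}) atTop
        ≤ ℙ' {ω' | s ≤ ⨆ v : Set.Icc u (u + δ), |B (2 * ↑v) ω' - B (2 * u) ω'|})
    (hYm : ∀ δ ∈ Set.Ioo (0:ℝ) 1, ∀ s : ℝ, 0 < s →
      Filter.limsup (fun n =>
          ℙ {ω | s < ⨆ v : Set.Icc u (u + δ), |Ym n (↑v) ω - Ym n u ω|}) atTop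
        ≤ ℙ' {ω' | s ≤ ⨆ v : Set.Icc u (u + δ), |B (2 * ↑v) ω' - B (2 * u) ω'|})
    -- Brownian scaling for the sup of increments
    (hBscale : ∀ δ ∈ Set.Ioo (0:ℝ) 1, ∀ M : ℝ, 0 < M →
      ℙ' {ω' | M ≤ ⨆ v : Set.Icc u (u + δ), |B (2 * ↑v) ω' - B (2 * u) ω'|}
        ≤ ℙ' {ω' | M / Real.sqrt (2 * δ) ≤ ⨆ v : Set.Icc (0:ℝ) 1, |B (↑v) ω'|})
    -- Gaussian tail bound for the running supremum of `B`
    (hBtail : ∀ M : ℝ, 0 < M →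
      ℙ' {ω' | M ≤ ⨆ v : Set.Icc (0:ℝ) 1, |B (↑v) ω'|}
        ≤ ENNReal.ofReal (4 * Real.exp (-(M ^ 2) / 2))) :
    ∀ η : ℝ, 0 < η →
      Filter.limsup (fun δ : ℝ =>
        ENNReal.ofReal (1 / δ) *
          Filter.limsup (fun n =>
            ℙ {ω | η < ⨆ v : Set.Icc u (u + δ), |X n (↑v) ω - X n u ω|}) atTop)
        (nhdsWithin 0 (Set.Ioi 0)) = 0 := by
  intro η hη
  obtain ⟨hβ₁, hβ₂⟩ := hβ
  set tail : ℝ → ℝ≥0∞ := fun δ => ENNReal.ofReal (4 * Real.exp (-(η ^ 2 / 16 / δ)))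
  -- Brownian scaling moves the level `η/2` to `η/(2√(2δ))`, where the Gaussian tail is `tail δ`.
  have hBη : ∀ δ ∈ Ioo (0 : ℝ) 1, ℙ' {ω' | η / 2 ≤
      ⨆ v : Set.Icc u (u + δ), |B (2 * ↑v) ω' - B (2 * u) ω'|} ≤ tail δ := by
    intro δ hδ
    have hδ₀ : 0 < δ := hδ.1
    refine (hBscale δ hδ _ (half_pos hη)).trans ((hBtail _ (by positivity)).trans_eq ?_)
    rw [div_pow, Real.sq_sqrt (by positivity)]
    congr 3
    ring
  have hgap : ∀ᶠ δ in 𝓝[>] (0 : ℝ), 4 * δ ^ (1 - β) ≤ η / 2 :=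
    ((tendsto_rpow_nhdsGT_zero (sub_pos.mpr hβ₂)).const_mul 4).eventually_le_const
      (by linarith)
  have hbound : ∀ᶠ δ in 𝓝[>] (0 : ℝ), limsup (fun n =>
      ℙ {ω | η < ⨆ v : Set.Icc u (u + δ), |X n (↑v) ω - X n u ω|}) atTop ≤
        ENNReal.ofReal (C * δ ^ (3 * β)) + (tail δ + tail δ) := by
    filter_upwards [hgap, Ioo_mem_nhdsGT one_pos] with δ hδη hδ
    exact (limsup_measure_lt_le_compl_add_add ℙ (hosc · δ hδ) (by linarith)).trans <|
      add_le_add (hE δ hδ) (add_le_add ((hYp δ hδ _ (half_pos hη)).trans (hBη δ hδ))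
        ((hYm δ hδ _ (half_pos hη)).trans (hBη δ hδ)))
  have hlim : Tendsto (fun δ => ENNReal.ofReal (1 / δ) *
      (ENNReal.ofReal (C * δ ^ (3 * β)) + (tail δ + tail δ))) (𝓝[>] 0) (𝓝 0) := by
    have hC := ENNReal.tendsto_ofReal_inv_mul_ofReal_nhdsGT_zero
      (tendsto_mul_rpow_div_nhdsGT_zero C (by linarith : 1 < 3 * β))
    have htail := ENNReal.tendsto_ofReal_inv_mul_ofReal_nhdsGT_zero
      (tendsto_mul_exp_neg_div_div_nhdsGT_zero 4 (by positivity : 0 < η ^ 2 / 16))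
    simpa only [mul_add, add_zero] using hC.add (htail.add htail)
  exact le_antisymm
    ((limsup_le_limsup (hbound.mono fun δ hδ => by gcongr)).trans_eq hlim.limsup_eq) bot_le

/-- **Modulus-of-continuity bound.** Suppose on events `E_n(δ)` with
`limsup_n P(E_n(δ)ᶜ) ≤ Cδ^{3β}` (`β > 1/3`) the oscillation of `X_n` on `[u,u+δ]` is
bounded by the oscillation of processes `Y_{n,±}` plus `4δ^{1−β}`, where `Y_{n,±}`
converge weakly to the Brownian motion `B(2·)`. Then for every `η > 0`,
`limsup_{δ→0+} (1/δ)·limsup_n P(sup_{v∈[u,u+δ]} |X_n(v) − X_n(u)| > η) = 0`. -/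
theorem oscillation_control
    {Ω Ω' : Type*} [MeasurableSpace Ω] [MeasurableSpace Ω']
    (ℙ : Measure Ω) [IsProbabilityMeasure ℙ] (ℙ' : Measure Ω') [IsProbabilityMeasure ℙ']
    (X Yp Ym : ℕ → ℝ → Ω → ℝ) (B : ℝ → Ω' → ℝ)
    (E : ℕ → ℝ → Set Ω) (C β : ℝ) (hC : 0 < C) (hβ : β ∈ Set.Ioo (1/3 : ℝ) 1)
    (u : ℝ) (hu : u ∈ Set.Ico (0:ℝ) 1)
    -- probability of the bad events
    (hE : ∀ δ ∈ Set.Ioo (0:ℝ) 1,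
      Filter.limsup (fun n => ℙ (E n δ)ᶜ) atTop ≤ ENNReal.ofReal (C * δ ^ (3 * β)))
    -- oscillation bound on the good events
    (hosc : ∀ (n : ℕ), ∀ δ ∈ Set.Ioo (0:ℝ) 1, ∀ ω ∈ E n δ,
      (⨆ v : Set.Icc u (u + δ), |X n (↑v) ω - X n u ω|)
        ≤ max (⨆ v : Set.Icc u (u + δ), |Yp n (↑v) ω - Yp n u ω|)
              (⨆ v : Set.Icc u (u + δ), |Ym n (↑v) ω - Ym n u ω|) + 4 * δ ^ (1 - β))
    -- weak convergence of `Y_{n,±}` to `B(2·)`: convergence of sup-increment tails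
    (hYp : ∀ δ ∈ Set.Ioo (0:ℝ) 1, ∀ s : ℝ, 0 < s →
      Filter.limsup (fun n =>
          ℙ {ω | s < ⨆ v : Set.Icc u (u + δ), |Yp n (↑v) ω - Yp n u ω|}) atTop
        ≤ ℙ' {ω' | s ≤ ⨆ v : Set.Icc u (u + δ), |B (2 * ↑v) ω' - B (2 * u) ω'|})
    (hYm : ∀ δ ∈ Set.Ioo (0:ℝ) 1, ∀ s : ℝ, 0 < s →
      Filter.limsup (fun n =>
          ℙ {ω | s < ⨆ v : Set.Icc u (u + δ), |Ym n (↑v) ω - Ym n u ω|}) atTop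
        ≤ ℙ' {ω' | s ≤ ⨆ v : Set.Icc u (u + δ), |B (2 * ↑v) ω' - B (2 * u) ω'|})
    -- Brownian scaling for the sup of increments
    (hBscale : ∀ δ ∈ Set.Ioo (0:ℝ) 1, ∀ M : ℝ, 0 < M →
      ℙ' {ω' | M ≤ ⨆ v : Set.Icc u (u + δ), |B (2 * ↑v) ω' - B (2 * u) ω'|}
        ≤ ℙ' {ω' | M / Real.sqrt (2 * δ) ≤ ⨆ v : Set.Icc (0:ℝ) 1, |B (↑v) ω'|})
    -- Gaussian tail bound for the running supremum of `B`
    (hBtail : ∀ M : ℝ, 0 < M →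
      ℙ' {ω' | M ≤ ⨆ v : Set.Icc (0:ℝ) 1, |B (↑v) ω'|}
        ≤ ENNReal.ofReal (4 * Real.exp (-(M ^ 2) / 2))) :
    ∀ η : ℝ, 0 < η →
      Filter.limsup (fun δ : ℝ =>
        ENNReal.ofReal (1 / δ) *
          Filter.limsup (fun n =>
            ℙ {ω | η < ⨆ v : Set.Icc u (u + δ), |X n (↑v) ω - X n u ω|}) atTop)
        (nhdsWithin 0 (Set.Ioi 0)) = 0 :=
  oscillation_control_general ℙ ℙ' X Yp Ym B E C β hβ u hE hosc hYp hYm hBscale hBtail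
end
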